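/- Let T_1,...,T_m be i.i.d. with continuous CDF F, let t_CS satisfy F(t_CS) ≥ 1 - α for α ∈ (0,1), and on {T_{(1)} ≤ t_CS} define k*_s = max{k : T_{(k)} ≤ t_CS}. Then P_m(1 - F(T_{(k*_s)}) > α) ≤ (2 - α - F(t_CS))^m - (1 - F(t_CS))^m. -/

import Mathlib

/-!
Write `u = 1 - F(t_CS)` and `S = (t_CS, ∞) ∪ {x | F x < 1 - α}`. On the event, every score
`T_i ≤ t_CS` sits at or below `T₍ₖ*₎` and hence has `F(T_i) < 1 - α`; so all scores lie in `S`,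
but not all of them in `(t_CS, ∞)`. Continuity of `F` gives `P(F(T_i) < 1 - α) ≤ 1 - α`, so
`P(T_i ∈ S) ≤ 1 - α + u`, and independence bounds the event by `(1 - α + u)^m - u^m`.
-/

open MeasureTheory ProbabilityTheory

/-- The `k`-th (0-based) order statistic of a finite vector of reals. -/
noncomputable def orderStat {m : ℕ} (v : Fin m → ℝ) (k : Fin m) : ℝ :=
  ((List.ofFn v).mergeSort (· ≤ ·)).get (Fin.cast (by simp) k)

/-- The surrogate index `k*_s = max{k : T₍ₖ₎ ≤ t}` (0-based; junk value when no order statistic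
is below the threshold). -/
noncomputable def kstarIdx {m : ℕ} (hm : 0 < m) (v : Fin m → ℝ) (t : ℝ) : Fin m :=
  if h : ((Finset.univ : Finset (Fin m)).filter (fun k => orderStat v k ≤ t)).Nonempty
  then Finset.max' _ h else ⟨0, hm⟩

open Set

section OrderStatistics

variable {m : ℕ} (v : Fin m → ℝ)

lemma orderStat_mono : Monotone (orderStat v) := fun _ _ h =>
  (List.pairwise_mergeSort' (· ≤ ·) (List.ofFn v)).rel_get_of_le h

lemma orderStat_mem_range (k : Fin m) : orderStat v k ∈ range v := by
  have h := ((List.ofFn v).mergeSort_perm (· ≤ ·)).mem_iff.mp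
    (List.get_mem _ (Fin.cast (by simp) k))
  simpa [List.mem_ofFn, orderStat] using h

lemma mem_range_orderStat (i : Fin m) : v i ∈ range (orderStat v) := by
  have h : v i ∈ (List.ofFn v).mergeSort (· ≤ ·) :=
    ((List.ofFn v).mergeSort_perm (· ≤ ·)).mem_iff.mpr (List.mem_ofFn.mpr ⟨i, rfl⟩)
  obtain ⟨n, hn⟩ := List.mem_iff_get.mp h
  exact ⟨Fin.cast (by simp) n, by simpa [orderStat] using hn⟩

lemma le_orderStat_kstarIdx (hm : 0 < m) {t : ℝ} (h0 : orderStat v ⟨0, hm⟩ ≤ t) {i : Fin m}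
    (hi : v i ≤ t) : v i ≤ orderStat v (kstarIdx hm v t) := by
  have hne : (Finset.univ.filter fun k => orderStat v k ≤ t).Nonempty := ⟨_, by simpa using h0⟩
  obtain ⟨k, hk⟩ := mem_range_orderStat v i
  rw [kstarIdx, dif_pos hne, ← hk]
  exact orderStat_mono v (Finset.le_max' _ k (by simpa [hk] using hi))

lemma forall_mem_and_exists_le_of_kstarIdx {F : ℝ → ℝ} (hF : Monotone F) (hm : 0 < m)
    {t p : ℝ} (h0 : orderStat v ⟨0, hm⟩ ≤ t) (hk : F (orderStat v (kstarIdx hm v t)) < p) :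
    (∀ i, v i ∈ Ioi t ∪ {x | F x < p}) ∧ ∃ i, v i ≤ t := by
  refine ⟨fun i => ?_, ?_⟩
  · rcases lt_or_ge t (v i) with hi | hi
    · exact Or.inl hi
    · exact Or.inr ((hF (le_orderStat_kstarIdx v hm h0 hi)).trans_lt hk)
  · obtain ⟨i, hi⟩ := orderStat_mem_range v ⟨0, hm⟩
    exact ⟨i, hi ▸ h0⟩

end OrderStatistics

section CDF

variable (μ : Measure ℝ) [IsProbabilityMeasure μ]

lemma measure_Ioi_eq_one_sub_cdf (x : ℝ) : μ (Ioi x) = ENNReal.ofReal (1 - cdf μ x) := by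
  rw [← compl_Iic, prob_compl_eq_one_sub measurableSet_Iic, ← ofReal_cdf,
    ENNReal.ofReal_sub _ (cdf_nonneg μ x), ENNReal.ofReal_one]

lemma measure_cdf_lt_le (hcont : Continuous (cdf μ)) (p : ℝ) :
    μ {x | cdf μ x < p} ≤ ENNReal.ofReal p := by
  rcases le_or_gt 1 p with hp1 | hp1
  · exact prob_le_one.trans (ENNReal.one_le_ofReal.mpr hp1)
  rcases isEmpty_or_nonempty {x | cdf μ x < p} with hempty | ⟨x₀, hx₀⟩
  · simp [Set.isEmpty_coe_sort.mp hempty]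
  obtain ⟨q, hq⟩ : p ∈ range (cdf μ) :=
    mem_range_of_exists_le_of_exists_ge hcont ⟨x₀, le_of_lt hx₀⟩
      (((tendsto_cdf_atTop μ).eventually_const_lt hp1).exists.imp fun _ => le_of_lt)
  calc μ {x | cdf μ x < p} ≤ μ (Iic q) :=
        measure_mono fun x hx => ((monotone_cdf μ).reflect_lt (hq ▸ hx)).le
    _ = ENNReal.ofReal p := by rw [← ofReal_cdf, hq]

end CDF

section RandomVariable

variable {Ω : Type*} [MeasurableSpace Ω] {P : Measure Ω} [IsProbabilityMeasure P] {X : Ω → ℝ}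
  {F : ℝ → ℝ}

lemma cdf_map_eq (hX : Measurable X) (hF : ∀ x, F x = (P {ω | X ω ≤ x}).toReal) :
    cdf (P.map X) = F := by
  have := Measure.isProbabilityMeasure_map (μ := P) hX.aemeasurable
  ext x
  rw [cdf_eq_real, measureReal_def, Measure.map_apply hX measurableSet_Iic, hF]
  rfl

lemma measure_preimage_Ioi_eq (hX : Measurable X) (hF : ∀ x, F x = (P {ω | X ω ≤ x}).toReal)
    (t : ℝ) : P (X ⁻¹' Ioi t) = ENNReal.ofReal (1 - F t) := by
  have := Measure.isProbabilityMeasure_map (μ := P) hX.aemeasurable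
  rw [← Measure.map_apply hX measurableSet_Ioi, measure_Ioi_eq_one_sub_cdf, cdf_map_eq hX hF]

lemma measure_preimage_Ioi_union_lt_le (hX : Measurable X)
    (hF : ∀ x, F x = (P {ω | X ω ≤ x}).toReal) (hFcont : Continuous F) (t : ℝ) {p : ℝ}
    (hp : 0 ≤ p) : P (X ⁻¹' (Ioi t ∪ {x | F x < p})) ≤ ENNReal.ofReal (p + (1 - F t)) := by
  have := Measure.isProbabilityMeasure_map (μ := P) hX.aemeasurable
  have hlt : P (X ⁻¹' {x | F x < p}) ≤ ENNReal.ofReal p := by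
    rw [← Measure.map_apply hX (measurableSet_lt hFcont.measurable measurable_const)]
    simpa only [cdf_map_eq hX hF] using
      measure_cdf_lt_le (P.map X) (by rwa [cdf_map_eq hX hF]) p
  have hF1 : F t ≤ 1 := (hF t).trans_le measureReal_le_one
  calc P (X ⁻¹' (Ioi t ∪ {x | F x < p}))
      ≤ P (X ⁻¹' Ioi t) + P (X ⁻¹' {x | F x < p}) := measure_union_le _ _
    _ ≤ ENNReal.ofReal (1 - F t) + ENNReal.ofReal p := by
      rw [measure_preimage_Ioi_eq hX hF]
      exact add_le_add_right hlt _
    _ = ENNReal.ofReal (p + (1 - F t)) := by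
      rw [add_comm, ENNReal.ofReal_add hp (sub_nonneg.mpr hF1)]

end RandomVariable

lemma ProbabilityTheory.iIndepFun.measure_forall_mem {Ω ι β : Type*} [MeasurableSpace Ω]
    [MeasurableSpace β] [Fintype ι] {P : Measure Ω} {T : ι → Ω → β} (hindep : iIndepFun T P)
    {S : Set β} (hS : MeasurableSet S) : P {ω | ∀ i, T i ω ∈ S} = ∏ i, P (T i ⁻¹' S) := by
  have h := hindep.measure_inter_preimage_eq_mul Finset.univ fun i _ => hS
  convert h using 2
  ext ω
  simp

lemma ProbabilityTheory.iIndepFun.measure_forall_mem_sdiff_le {Ω ι β : Type*}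
    [MeasurableSpace Ω] [MeasurableSpace β] [Fintype ι] {P : Measure Ω} [IsFiniteMeasure P]
    {T : ι → Ω → β} (hmeas : ∀ i, Measurable (T i)) (hindep : iIndepFun T P) {R S : Set β}
    (hR : MeasurableSet R) (hS : MeasurableSet S) (hRS : R ⊆ S) {a b : ENNReal}
    (ha : ∀ i, P (T i ⁻¹' S) ≤ a) (hb : ∀ i, P (T i ⁻¹' R) = b) :
    P ({ω | ∀ i, T i ω ∈ S} \ {ω | ∀ i, T i ω ∈ R}) ≤ a ^ Fintype.card ι - b ^ Fintype.card ι := by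
  have hRmeas : MeasurableSet {ω | ∀ i, T i ω ∈ R} := by
    convert MeasurableSet.iInter fun i => hmeas i hR
    ext ω
    simp
  have hsub : {ω | ∀ i, T i ω ∈ R} ⊆ {ω | ∀ i, T i ω ∈ S} := fun _ hω i => hRS (hω i)
  rw [measure_sdiff hsub hRmeas.nullMeasurableSet (measure_ne_top _ _),
    hindep.measure_forall_mem hS, hindep.measure_forall_mem hR]
  simp only [hb, Finset.prod_const, Finset.card_univ]
  gcongr
  exact Finset.prod_le_pow_card _ _ _ fun i _ => ha i

theorem surrogate_violation_rate_bound_general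
    {Ω : Type*} [MeasurableSpace Ω] (P : Measure Ω) [IsProbabilityMeasure P]
    (m : ℕ) (hm : 0 < m) (T : Fin m → Ω → ℝ) (hmeas : ∀ i, Measurable (T i))
    (hindep : iIndepFun T P)
    (F : ℝ → ℝ) (hF : ∀ i x, F x = (P {ω | T i ω ≤ x}).toReal)
    (hFcont : Continuous F)
    (α : ℝ) (hα : α ∈ Set.Ioo (0 : ℝ) 1)
    (tCS : ℝ) :
    P ({ω | orderStat (fun i => T i ω) ⟨0, hm⟩ ≤ tCS} ∩
        {ω | 1 - F (orderStat (fun i => T i ω) (kstarIdx hm (fun i => T i ω) tCS)) > α})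
      ≤ ENNReal.ofReal ((2 - α - F tCS) ^ m - (1 - F tCS) ^ m) := by
  have hFmono : Monotone F := cdf_map_eq (hmeas _) (hF ⟨0, hm⟩) ▸ monotone_cdf _
  have hu : 0 ≤ 1 - F tCS := sub_nonneg.mpr ((hF ⟨0, hm⟩ tCS).trans_le measureReal_le_one)
  calc
    P _ ≤ P ({ω | ∀ i, T i ω ∈ Ioi tCS ∪ {x | F x < 1 - α}} \ {ω | ∀ i, T i ω ∈ Ioi tCS}) := by
      refine measure_mono fun ω ⟨h0, hk⟩ => ?_
      obtain ⟨hall, i, hi⟩ :=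
        forall_mem_and_exists_le_of_kstarIdx _ hFmono hm h0 (lt_sub_comm.mp hk)
      exact ⟨hall, fun h => (h i).not_ge hi⟩
    _ ≤ ENNReal.ofReal (1 - α + (1 - F tCS)) ^ m - ENNReal.ofReal (1 - F tCS) ^ m := by
      simpa using hindep.measure_forall_mem_sdiff_le hmeas measurableSet_Ioi
        (measurableSet_Ioi.union (measurableSet_lt hFcont.measurable measurable_const))
        subset_union_left
        (fun i => measure_preimage_Ioi_union_lt_le (hmeas i) (hF i) hFcont tCS
          (sub_nonneg.mpr hα.2.le))
        (fun i => measure_preimage_Ioi_eq (hmeas i) (hF i) tCS)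
    _ = ENNReal.ofReal ((2 - α - F tCS) ^ m - (1 - F tCS) ^ m) := by
      rw [← ENNReal.ofReal_pow (by linarith [hα.2]), ← ENNReal.ofReal_pow hu,
        ← ENNReal.ofReal_sub _ (pow_nonneg hu m)]
      ring_nf

/-- For i.i.d. scores with continuous CDF `F` and `F(t_CS) ≥ 1 - α`: on the event
`T₍₁₎ ≤ t_CS`, the probability that the surrogate classifier's type I error exceeds `α`
is at most `(2 - α - F(t_CS))^m - (1 - F(t_CS))^m`. -/
theorem surrogate_violation_rate_bound
    {Ω : Type*} [MeasurableSpace Ω] (P : Measure Ω) [IsProbabilityMeasure P]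
    (m : ℕ) (hm : 0 < m) (T : Fin m → Ω → ℝ) (hmeas : ∀ i, Measurable (T i))
    (hindep : iIndepFun T P)
    (F : ℝ → ℝ) (hF : ∀ i x, F x = (P {ω | T i ω ≤ x}).toReal)
    (hFcont : Continuous F)
    (α : ℝ) (hα : α ∈ Set.Ioo (0 : ℝ) 1)
    (tCS : ℝ) (htCS : 1 - α ≤ F tCS) :
    P ({ω | orderStat (fun i => T i ω) ⟨0, hm⟩ ≤ tCS} ∩
        {ω | 1 - F (orderStat (fun i => T i ω) (kstarIdx hm (fun i => T i ω) tCS)) > α})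
      ≤ ENNReal.ofReal ((2 - α - F tCS) ^ m - (1 - F tCS) ^ m) :=
  surrogate_violation_rate_bound_general P m hm T hmeas hindep F hF hFcont α hα tCS
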